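/- Fix p ∈ (0,1/2) and a sequence C_n → ∞ with ε_n := C_n/n ∈ (0,1) for all n. Then there exist a constant c > 0 and N ∈ ℕ such that for all n ≥ N, the mixing time of the chain K_{n,p,ε_n} satisfies τ_mix(K_{n,p,ε_n}) ≥ c·n/C_n. -/

import Mathlib

/-!
Started at state `1`, the chain moves by at most one site per step unless it jumps to `n`,
which it does with probability `ε` each step; so after `T` steps it is still in
`{1, …, T+1}` with probability at least `(1-ε)^T ≥ 1 - Tε`. Reaching that set from `n`
takes more than `m = n - T - 2` steps, so after `m` steps, from any start, the chain is
there only if it has not jumped; by stationarity `π` gives the set mass at most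
`(1-ε)^m ≤ exp(-mε)`. When `T ≤ n / (4 C_n)` the first bound is at least `3/4` and the
second at most `1/2`, so `d_TV(K^T(1,·), π) ≥ 1/4`.

The mixing time is an infimum, so the argument also needs that it is attained: the
minorization `K ≥ ε·1_{j=n}` makes `K` contract the `ℓ¹` distance by a factor `1-ε`.
-/

/-- Total variation distance between probability mass functions on a finite type. -/
noncomputable def dTV {α : Type*} [Fintype α] (p q : α → ℝ) : ℝ :=
  (∑ x, |p x - q x|) / 2

/-- The birth-and-death kernel `Q_{n,p}` on the states `{1,…,n}` (modelled by `Fin n`,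
with `i : Fin n` representing the state `i+1`):
`Q(i,i+1) = p/2` for `i < n`, `Q(i,i−1) = (1−p)/2` for `i > 1`, `Q(i,i) = 1/2` for
`1 < i < n`, `Q(1,1) = (2−p)/2`, `Q(n,n) = (1+p)/2`. -/
noncomputable def Qnp (n : ℕ) (p : ℝ) : Fin n → Fin n → ℝ := fun i j =>
  if (j : ℕ) = (i : ℕ) + 1 ∧ (i : ℕ) + 1 < n then p / 2
  else if (j : ℕ) + 1 = (i : ℕ) then (1 - p) / 2
  else if j = i then
    (if (i : ℕ) = 0 then (2 - p) / 2 else if (i : ℕ) + 1 = n then (1 + p) / 2 else 1 / 2)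
  else 0

/-- The perturbed kernel `K_{n,p,ε}(i,j) = (1−ε) Q_{n,p}(i,j) + ε·1_{{j=n}}`. -/
noncomputable def Knpe (n : ℕ) (p ε : ℝ) : Fin n → Fin n → ℝ := fun i j =>
  (1 - ε) * Qnp n p i j + (if (j : ℕ) + 1 = n then ε else 0)

/-- `t`-step transition probabilities of a kernel on a finite state space. -/
noncomputable def kpow {n : ℕ} (P : Fin n → Fin n → ℝ) : ℕ → Fin n → Fin n → ℝ
  | 0 => fun i j => if i = j then 1 else 0
  | t + 1 => fun i j => ∑ l, kpow P t i l * P l j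

/-- The mixing time `τ_mix(P) = min{t : sup_i d_TV(P^t(i,·), π) < 1/4}`. -/
noncomputable def mixTime {n : ℕ} (P : Fin n → Fin n → ℝ) (pi : Fin n → ℝ) : ℕ :=
  sInf {t : ℕ | ∀ i, dTV (kpow P t i) pi < 1/4}

open Finset

section Kernel

variable {n : ℕ} {P : Fin n → Fin n → ℝ}

lemma kpow_nonneg (hP : ∀ i j, 0 ≤ P i j) (t : ℕ) (i j : Fin n) : 0 ≤ kpow P t i j := by
  induction t generalizing j with
  | zero => simp only [kpow]; split_ifs <;> norm_num
  | succ t ih => exact sum_nonneg fun l _ => mul_nonneg (ih l) (hP l j)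

lemma sum_kpow_succ (t : ℕ) (i : Fin n) (S : Finset (Fin n)) :
    ∑ j ∈ S, kpow P (t + 1) i j = ∑ l, kpow P t i l * ∑ j ∈ S, P l j := by
  simp only [kpow, mul_sum]
  exact sum_comm

lemma sum_kpow_eq_one (hP : ∀ i, ∑ j, P i j = 1) (t : ℕ) (i : Fin n) :
    ∑ j, kpow P t i j = 1 := by
  induction t with
  | zero => simp [kpow]
  | succ t ih => rw [sum_kpow_succ]; simp only [hP, mul_one, ih]

lemma sum_mul_kpow_of_stationary {π : Fin n → ℝ} (hπ : ∀ j, ∑ i, π i * P i j = π j)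
    (t : ℕ) (j : Fin n) : ∑ i, π i * kpow P t i j = π j := by
  induction t generalizing j with
  | zero => simp [kpow]
  | succ t ih =>
    simp only [kpow, mul_sum, ← mul_assoc]
    rw [sum_comm]
    simp only [← sum_mul, ih, hπ]

lemma sum_le_of_stationary {π : Fin n → ℝ} (hπ0 : ∀ i, 0 ≤ π i) (hπ1 : ∑ i, π i = 1)
    (hπ : ∀ j, ∑ i, π i * P i j = π j) {S : Finset (Fin n)} {t : ℕ} {b : ℝ}
    (hb : ∀ i, ∑ j ∈ S, kpow P t i j ≤ b) : ∑ j ∈ S, π j ≤ b :=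
  calc ∑ j ∈ S, π j = ∑ i, π i * ∑ j ∈ S, kpow P t i j := by
        simp only [mul_sum]
        rw [sum_comm]
        simp only [sum_mul_kpow_of_stationary hπ t]
    _ ≤ ∑ i, π i * b := sum_le_sum fun i _ => mul_le_mul_of_nonneg_left (hb i) (hπ0 i)
    _ = b := by rw [← sum_mul, hπ1, one_mul]

lemma pow_le_sum_kpow (hP : ∀ i j, 0 ≤ P i j) (A : ℕ → Finset (Fin n)) {a : ℝ} (ha : 0 ≤ a)
    (hA : ∀ s, ∀ l ∈ A s, a ≤ ∑ j ∈ A (s + 1), P l j) {i : Fin n} (hi : i ∈ A 0) (t : ℕ) :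
    a ^ t ≤ ∑ j ∈ A t, kpow P t i j := by
  induction t with
  | zero => simp [kpow, hi]
  | succ t ih =>
    rw [sum_kpow_succ]
    calc a ^ (t + 1) = a ^ t * a := pow_succ a t
      _ ≤ (∑ l ∈ A t, kpow P t i l) * a := mul_le_mul_of_nonneg_right ih ha
      _ = ∑ l ∈ A t, kpow P t i l * a := sum_mul _ _ _
      _ ≤ ∑ l ∈ A t, kpow P t i l * ∑ j ∈ A (t + 1), P l j :=
        sum_le_sum fun l hl => mul_le_mul_of_nonneg_left (hA t l hl) (kpow_nonneg hP t i l)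
      _ ≤ ∑ l, kpow P t i l * ∑ j ∈ A (t + 1), P l j :=
        sum_le_sum_of_subset_of_nonneg (subset_univ _) fun l _ _ =>
          mul_nonneg (kpow_nonneg hP t i l) (sum_nonneg fun j _ => hP l j)

lemma sum_kpow_le_pow (hP : ∀ i j, 0 ≤ P i j) (B : ℕ → Finset (Fin n)) {b : ℝ} (hb : 0 ≤ b)
    (hB : ∀ s l, ∑ j ∈ B (s + 1), P l j ≤ b)
    (hB_out : ∀ s, ∀ l ∉ B s, ∀ j ∈ B (s + 1), P l j = 0) (i : Fin n) (t : ℕ) :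
    ∑ j ∈ B t, kpow P t i j ≤ b ^ t := by
  induction t with
  | zero =>
    simp only [kpow, sum_ite_eq, pow_zero]
    split_ifs <;> norm_num
  | succ t ih =>
    rw [sum_kpow_succ, ← sum_subset (subset_univ (B t)) fun l _ hl => by
      rw [sum_eq_zero fun j hj => hB_out t l hl j hj, mul_zero]]
    calc ∑ l ∈ B t, kpow P t i l * ∑ j ∈ B (t + 1), P l j
        ≤ ∑ l ∈ B t, kpow P t i l * b :=
          sum_le_sum fun l _ => mul_le_mul_of_nonneg_left (hB t l) (kpow_nonneg hP t i l)
      _ ≤ b ^ t * b := by rw [← sum_mul]; exact mul_le_mul_of_nonneg_right ih hb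
      _ = b ^ (t + 1) := (pow_succ b t).symm

end Kernel

lemma sub_le_dTV {α : Type*} [Fintype α] [DecidableEq α] {μ ν : α → ℝ}
    (h : ∑ x, μ x = ∑ x, ν x) (S : Finset α) :
    ∑ x ∈ S, μ x - ∑ x ∈ S, ν x ≤ dTV μ ν := by
  have hS : ∑ x ∈ S, (μ x - ν x) ≤ ∑ x ∈ S, |μ x - ν x| :=
    sum_le_sum fun x _ => le_abs_self _
  have hSc : ∑ x ∈ Sᶜ, (ν x - μ x) ≤ ∑ x ∈ Sᶜ, |μ x - ν x| :=
    sum_le_sum fun x _ => by rw [abs_sub_comm]; exact le_abs_self _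
  have hμ := sum_add_sum_compl S μ
  have hν := sum_add_sum_compl S ν
  have habs := sum_add_sum_compl S fun x => |μ x - ν x|
  simp only [sum_sub_distrib] at hS hSc
  unfold dTV
  linarith

section Doeblin

variable {n : ℕ} {K Q : Fin n → Fin n → ℝ} {r : Fin n → ℝ} {ε : ℝ}

lemma sum_abs_sub_le_of_eq_mul_add (hQ0 : ∀ i j, 0 ≤ Q i j) (hQ1 : ∀ i, ∑ j, Q i j = 1)
    (hK : ∀ i j, K i j = (1 - ε) * Q i j + r j) (hε : ε ≤ 1) {μ ν : Fin n → ℝ}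
    (h : ∑ i, μ i = ∑ i, ν i) :
    ∑ j, |∑ i, μ i * K i j - ∑ i, ν i * K i j| ≤ (1 - ε) * ∑ i, |μ i - ν i| := by
  have hdiff : ∀ j, ∑ i, μ i * K i j - ∑ i, ν i * K i j
      = (1 - ε) * ∑ i, (μ i - ν i) * Q i j := fun j => by
    have hr : ∑ i, (μ i - ν i) * r j = 0 := by
      rw [← sum_mul, sum_sub_distrib, h, sub_self, zero_mul]
    calc ∑ i, μ i * K i j - ∑ i, ν i * K i j = ∑ i, (μ i - ν i) * K i j := by
          rw [← sum_sub_distrib]; simp only [sub_mul]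
      _ = ∑ i, ((1 - ε) * ((μ i - ν i) * Q i j) + (μ i - ν i) * r j) :=
          sum_congr rfl fun i _ => by rw [hK]; ring
      _ = (1 - ε) * ∑ i, (μ i - ν i) * Q i j := by rw [sum_add_distrib, hr, add_zero, mul_sum]
  calc ∑ j, |∑ i, μ i * K i j - ∑ i, ν i * K i j|
      ≤ ∑ j, (1 - ε) * ∑ i, |μ i - ν i| * Q i j := sum_le_sum fun j _ => by
        rw [hdiff, abs_mul, abs_of_nonneg (sub_nonneg.mpr hε)]
        refine mul_le_mul_of_nonneg_left ((abs_sum_le_sum_abs _ _).trans_eq ?_) (sub_nonneg.mpr hε)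
        simp only [abs_mul, abs_of_nonneg (hQ0 _ j)]
    _ = (1 - ε) * ∑ i, |μ i - ν i| := by
        rw [← mul_sum, sum_comm]
        simp only [← mul_sum, hQ1, mul_one]

lemma sum_abs_kpow_sub_le (hQ0 : ∀ i j, 0 ≤ Q i j) (hQ1 : ∀ i, ∑ j, Q i j = 1)
    (hK : ∀ i j, K i j = (1 - ε) * Q i j + r j) (hK1 : ∀ i, ∑ j, K i j = 1) (hε : ε ≤ 1)
    {π : Fin n → ℝ} (hπ0 : ∀ i, 0 ≤ π i) (hπ1 : ∑ i, π i = 1)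
    (hπ : ∀ j, ∑ i, π i * K i j = π j) (t : ℕ) (i : Fin n) :
    ∑ j, |kpow K t i j - π j| ≤ 2 * (1 - ε) ^ t := by
  induction t with
  | zero =>
    calc ∑ j, |kpow K 0 i j - π j| ≤ ∑ j, (kpow K 0 i j + π j) := sum_le_sum fun j _ => by
          refine (abs_sub _ _).trans_eq ?_
          rw [abs_of_nonneg (hπ0 j), abs_of_nonneg (by simp only [kpow]; split_ifs <;> norm_num)]
      _ = 2 * (1 - ε) ^ 0 := by rw [sum_add_distrib, sum_kpow_eq_one hK1, hπ1]; norm_num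
  | succ t ih =>
    calc ∑ j, |kpow K (t + 1) i j - π j|
        = ∑ j, |∑ l, kpow K t i l * K l j - ∑ l, π l * K l j| := by simp only [kpow, hπ]
      _ ≤ (1 - ε) * ∑ l, |kpow K t i l - π l| :=
        sum_abs_sub_le_of_eq_mul_add hQ0 hQ1 hK hε (by rw [sum_kpow_eq_one hK1, hπ1])
      _ ≤ (1 - ε) * (2 * (1 - ε) ^ t) := mul_le_mul_of_nonneg_left ih (sub_nonneg.mpr hε)
      _ = 2 * (1 - ε) ^ (t + 1) := by ring

lemma dTV_kpow_mixTime_lt (hQ0 : ∀ i j, 0 ≤ Q i j) (hQ1 : ∀ i, ∑ j, Q i j = 1)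
    (hK : ∀ i j, K i j = (1 - ε) * Q i j + r j) (hK1 : ∀ i, ∑ j, K i j = 1)
    (hε0 : 0 < ε) (hε1 : ε ≤ 1) {π : Fin n → ℝ} (hπ0 : ∀ i, 0 ≤ π i) (hπ1 : ∑ i, π i = 1)
    (hπ : ∀ j, ∑ i, π i * K i j = π j) (i : Fin n) :
    dTV (kpow K (mixTime K π) i) π < 1 / 4 := by
  obtain ⟨t, ht⟩ := exists_pow_lt_of_lt_one (show (0 : ℝ) < 1 / 4 by norm_num)
    (show 1 - ε < 1 by linarith)
  have hmem : mixTime K π ∈ {t : ℕ | ∀ i, dTV (kpow K t i) π < 1 / 4} :=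
    Nat.sInf_mem ⟨t, fun i => by
      have := sum_abs_kpow_sub_le hQ0 hQ1 hK hK1 hε1 hπ0 hπ1 hπ t i
      unfold dTV
      linarith⟩
  exact hmem i

end Doeblin

section BirthDeath

variable {n : ℕ} {p ε : ℝ}

lemma Qnp_nonneg (hp0 : 0 ≤ p) (hp1 : p ≤ 1) (i j : Fin n) : 0 ≤ Qnp n p i j := by
  unfold Qnp; split_ifs <;> linarith

lemma Qnp_eq_zero {i j : Fin n} (h : (i : ℕ) + 1 < j ∨ (j : ℕ) + 1 < i) : Qnp n p i j = 0 := by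
  have hji : j ≠ i := by rintro rfl; omega
  rw [Qnp, if_neg (by omega), if_neg (by omega), if_neg hji]

lemma sum_Qnp (hn : 2 ≤ n) (i : Fin n) : ∑ j, Qnp n p i j = 1 := by
  have hQ : ∀ j : Fin n, Qnp n p i j =
      (if (j : ℕ) = i + 1 then (if (i : ℕ) + 1 < n then p / 2 else 0) else 0)
      + (if (j : ℕ) = i - 1 then (if (i : ℕ) = 0 then 0 else (1 - p) / 2) else 0)
      + (if (j : ℕ) = i then
          (if (i : ℕ) = 0 then (2 - p) / 2 else if (i : ℕ) + 1 = n then (1 + p) / 2 else 1 / 2)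
          else 0) := fun j => by
    simp only [Qnp, Fin.ext_iff]
    split_ifs <;> first | omega | ring
  simp only [hQ, sum_add_distrib]
  rw [Fin.sum_univ_eq_sum_range (fun j => if j = (i : ℕ) + 1 then _ else 0),
    Fin.sum_univ_eq_sum_range (fun j => if j = (i : ℕ) - 1 then _ else 0),
    Fin.sum_univ_eq_sum_range (fun j => if j = (i : ℕ) then _ else 0)]
  simp only [sum_ite_eq', mem_range]
  have := i.isLt
  split_ifs <;> first | omega | ring

lemma sum_Qnp_of_subset (hn : 2 ≤ n) (i : Fin n) {S : Finset (Fin n)}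
    (hS : ∀ j : Fin n, (j : ℕ) ≤ i + 1 → j ∈ S) : ∑ j ∈ S, Qnp n p i j = 1 := by
  rw [← sum_Qnp hn i]
  exact sum_subset (subset_univ S) fun j _ hj => Qnp_eq_zero (by grind)

lemma Knpe_nonneg (hp0 : 0 ≤ p) (hp1 : p ≤ 1) (hε0 : 0 ≤ ε) (hε1 : ε ≤ 1) (i j : Fin n) :
    0 ≤ Knpe n p ε i j := by
  have := mul_nonneg (sub_nonneg.mpr hε1) (Qnp_nonneg hp0 hp1 i j)
  unfold Knpe
  split_ifs <;> linarith

lemma mul_Qnp_le_Knpe (hε0 : 0 ≤ ε) (i j : Fin n) : (1 - ε) * Qnp n p i j ≤ Knpe n p ε i j := by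
  unfold Knpe
  split_ifs <;> linarith

lemma Knpe_of_ne_last {i j : Fin n} (h : (j : ℕ) + 1 ≠ n) :
    Knpe n p ε i j = (1 - ε) * Qnp n p i j := by
  simp [Knpe, h]

lemma sum_Knpe (hn : 2 ≤ n) (i : Fin n) : ∑ j, Knpe n p ε i j = 1 := by
  simp only [Knpe, sum_add_distrib, ← mul_sum, sum_Qnp hn]
  rw [Fin.sum_univ_eq_sum_range (fun j => if j + 1 = n then ε else 0)]
  rw [sum_eq_single (n - 1) (fun j hj hne => if_neg (by simp at hj; omega))
    (fun h => absurd (mem_range.mpr (by omega)) h), if_pos (by omega)]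
  ring

end BirthDeath

section LowerBound

variable {n : ℕ} {p ε : ℝ}

lemma pow_le_sum_kpow_Knpe (hp0 : 0 ≤ p) (hp1 : p ≤ 1) (hε0 : 0 ≤ ε) (hε1 : ε ≤ 1)
    (hn : 2 ≤ n) {i : Fin n} (hi : (i : ℕ) = 0) (t : ℕ) :
    (1 - ε) ^ t ≤ ∑ j ∈ {j : Fin n | (j : ℕ) ≤ t}, kpow (Knpe n p ε) t i j := by
  refine pow_le_sum_kpow (Knpe_nonneg hp0 hp1 hε0 hε1) (fun s => {j : Fin n | (j : ℕ) ≤ s})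
    (sub_nonneg.mpr hε1) (fun s l hl => ?_) (by simp [hi]) t
  have hl : (l : ℕ) ≤ s := by simpa using hl
  calc 1 - ε = (1 - ε) * ∑ j ∈ {j : Fin n | (j : ℕ) ≤ s + 1}, Qnp n p l j := by
        rw [sum_Qnp_of_subset hn l fun j hj => by simp; omega, mul_one]
    _ ≤ ∑ j ∈ {j : Fin n | (j : ℕ) ≤ s + 1}, Knpe n p ε l j := by
        rw [mul_sum]; exact sum_le_sum fun j _ => mul_Qnp_le_Knpe hε0 l j

lemma sum_kpow_Knpe_le (hp0 : 0 ≤ p) (hp1 : p ≤ 1) (hε0 : 0 ≤ ε) (hε1 : ε ≤ 1)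
    (hn : 2 ≤ n) (i : Fin n) (s : ℕ) :
    ∑ j ∈ {j : Fin n | (j : ℕ) + s + 1 < n}, kpow (Knpe n p ε) s i j ≤ (1 - ε) ^ s := by
  refine sum_kpow_le_pow (Knpe_nonneg hp0 hp1 hε0 hε1) (fun s => {j : Fin n | (j : ℕ) + s + 1 < n})
    (sub_nonneg.mpr hε1) (fun s l => ?_) (fun s l hl j hj => ?_) i s
  · calc ∑ j ∈ {j : Fin n | (j : ℕ) + (s + 1) + 1 < n}, Knpe n p ε l j
        = (1 - ε) * ∑ j ∈ {j : Fin n | (j : ℕ) + (s + 1) + 1 < n}, Qnp n p l j := by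
          rw [mul_sum]
          exact sum_congr rfl fun j hj => Knpe_of_ne_last (by simp at hj; omega)
      _ ≤ (1 - ε) * 1 := by
          refine mul_le_mul_of_nonneg_left ?_ (sub_nonneg.mpr hε1)
          rw [← sum_Qnp hn l]
          exact sum_le_sum_of_subset_of_nonneg (subset_univ _) fun j _ _ => Qnp_nonneg hp0 hp1 l j
      _ = 1 - ε := mul_one _
  · simp only [mem_filter, mem_univ, true_and, not_lt] at hl hj
    rw [Knpe_of_ne_last (by omega), Qnp_eq_zero (by omega), mul_zero]

lemma pow_sub_pow_le_dTV_kpow_Knpe (hp0 : 0 ≤ p) (hp1 : p ≤ 1) (hε0 : 0 ≤ ε) (hε1 : ε ≤ 1)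
    {π : Fin n → ℝ} (hπ0 : ∀ i, 0 ≤ π i) (hπ1 : ∑ i, π i = 1)
    (hπ : ∀ j, ∑ i, π i * Knpe n p ε i j = π j) {T m : ℕ} (hn : n = T + m + 2) :
    (1 - ε) ^ T - (1 - ε) ^ m ≤ dTV (kpow (Knpe n p ε) T ⟨0, by omega⟩) π := by
  have hn2 : 2 ≤ n := by omega
  have hS : ∀ j : Fin n, (j : ℕ) ≤ T ↔ (j : ℕ) + m + 1 < n := fun j => by omega
  refine le_trans ?_ (sub_le_dTV (by rw [sum_kpow_eq_one (sum_Knpe hn2), hπ1])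
    {j : Fin n | (j : ℕ) ≤ T})
  gcongr
  · exact pow_le_sum_kpow_Knpe hp0 hp1 hε0 hε1 hn2 rfl T
  · simp only [hS]
    exact sum_le_of_stationary hπ0 hπ1 hπ fun i => sum_kpow_Knpe_le hp0 hp1 hε0 hε1 hn2 i m

end LowerBound

lemma one_sub_pow_le_half {ε : ℝ} (hε : ε ≤ 1) {m : ℕ} (h : 1 ≤ m * ε) : (1 - ε) ^ m ≤ 1 / 2 :=
  calc (1 - ε) ^ m ≤ Real.exp (-ε) ^ m :=
        pow_le_pow_left₀ (sub_nonneg.mpr hε) (Real.one_sub_le_exp_neg ε) m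
    _ = Real.exp (-1) * Real.exp (-(m * ε - 1)) := by
        rw [← Real.exp_nat_mul, ← Real.exp_add]; ring_nf
    _ ≤ 1 / 2 * 1 := by
        gcongr
        · rw [Real.exp_neg, inv_le_comm₀ (Real.exp_pos 1) (by norm_num)]
          linarith [Real.add_one_le_exp 1]
        · exact Real.exp_le_one_iff.mpr (by linarith)
    _ = 1 / 2 := mul_one _

lemma exists_eq_add_add_two_of_mul {n T : ℕ} {ε : ℝ} (hε1 : ε < 1) (hnε : 4 ≤ n * ε)
    (hTε : T * ε < 1 / 4) : ∃ m : ℕ, n = T + m + 2 ∧ 1 ≤ m * ε := by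
  have hε0 : 0 < ε := by nlinarith [(n.cast_nonneg : (0 : ℝ) ≤ n)]
  have hTn : T + 2 ≤ n := by
    have : ((T + 2 : ℕ) : ℝ) < n := by push_cast; nlinarith
    exact_mod_cast this.le
  refine ⟨n - T - 2, by omega, ?_⟩
  rw [Nat.cast_sub (by omega), Nat.cast_sub (by omega), Nat.cast_two]
  linarith

/-- Fix `p ∈ (0,1/2)` and a sequence `C_n → ∞` with
`ε_n := C_n/n ∈ (0,1)` for all (positive) `n`.  Then there are `c > 0` and `N` such that
for all `n ≥ N`, the mixing time of `K_{n,p,ε_n}` (with stationary distribution `π`)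
is at least `c·n/C_n`. -/
theorem stmt10 (p : ℝ) (hp : p ∈ Set.Ioo (0 : ℝ) (1/2))
    (C : ℕ → ℝ) (hC : Filter.Tendsto C Filter.atTop Filter.atTop)
    (hε : ∀ n : ℕ, 1 ≤ n → C n / n ∈ Set.Ioo (0 : ℝ) 1) :
    ∃ c : ℝ, 0 < c ∧ ∃ N : ℕ, ∀ n : ℕ, N ≤ n → ∀ pi : Fin n → ℝ,
      (∀ i, 0 ≤ pi i) → (∑ i, pi i = 1) →
      (∀ j, ∑ i, pi i * Knpe n p (C n / n) i j = pi j) →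
      c * n / C n ≤ (mixTime (Knpe n p (C n / n)) pi : ℝ) := by
  obtain ⟨hp0, hp1⟩ := hp
  obtain ⟨N, hN⟩ := Filter.eventually_atTop.mp (hC.eventually_ge_atTop 4)
  refine ⟨1 / 4, by norm_num, max N 1, fun n hn π hπ0 hπ1 hπ => ?_⟩
  have hCn : 4 ≤ C n := hN n (le_of_max_le_left hn)
  obtain ⟨hε0, hε1⟩ := hε n (le_of_max_le_right hn)
  have hn0 : (0 : ℝ) < n := by exact_mod_cast le_of_max_le_right hn
  have hnε : n * (C n / n) = C n := by field_simp
  set ε := C n / n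
  set T := mixTime (Knpe n p ε) π
  by_contra! hT
  have hTε : T * ε < 1 / 4 :=
    calc T * ε < 1 / 4 * n / C n * ε := mul_lt_mul_of_pos_right hT hε0
      _ = 1 / 4 * (n * ε) / C n := by ring
      _ = 1 / 4 := by rw [hnε]; field_simp
  obtain ⟨m, hm, hmε⟩ := exists_eq_add_add_two_of_mul hε1 (hnε ▸ hCn) hTε
  have hn2 : 2 ≤ n := by omega
  have hmix := dTV_kpow_mixTime_lt (K := Knpe n p ε) (Qnp_nonneg hp0.le (by linarith)) (sum_Qnp hn2)
    (fun _ _ => rfl) (sum_Knpe hn2) hε0 hε1.le hπ0 hπ1 hπ ⟨0, by omega⟩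
  have hgap := pow_sub_pow_le_dTV_kpow_Knpe hp0.le (by linarith) hε0.le hε1.le hπ0 hπ1 hπ hm
  have hT_pow : 1 - T * ε ≤ (1 - ε) ^ T := by
    simpa [sub_eq_add_neg] using one_add_mul_le_pow (by linarith : (-2 : ℝ) ≤ -ε) T
  linarith [one_sub_pow_le_half hε1.le hmε]
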